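/- For all x ∈ (0, 1/2), the derivative comparison M_⋆'(x) ≤ M_MS'(x) holds, where M_MS(x) = (π/4)·log(1/(1−2x)), with equality exactly at the points x = κ_n; consequently M_⋆(x) < M_MS(x) for all x ∈ (0, 1/2). -/

import Mathlib

/-!
On the `n`-th piece `[κ n, κ (n + 1))` write `x = κ n + qⁿ t` with `q = (π² - 4)/(π² + 4)`,
so that `1 - 2x = qⁿ (1 - 2t)` and `0 ≤ t < 4/(π² + 4)`. Then `M_⋆'(x) = π / (2 qⁿ √(1 - π²t²))`
and `M_MS'(x) = π / (2 qⁿ (1 - 2t))`, while `(1 - 2t)² - (1 - π²t²) = t ((π² + 4) t - 4) ≤ 0`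
with equality only at `t = 0`. Adjacent pieces meet at `κ n` with the same one-sided derivative
`π / (2 qⁿ)`, because `√(1 - (4π/(π² + 4))²) = q`. Hence `M_MS - M_⋆` vanishes at `0`, is
nondecreasing, and is strictly increasing on the first piece, so it is positive on `(0, 1/2)`.
-/

open Real Set Filter Topology

theorem hasDerivAt_of_eventuallyEq_nhdsLE_nhdsGE {f g h : ℝ → ℝ} {a f' : ℝ}
    (hg : HasDerivAt g f' a) (hh : HasDerivAt h f' a)
    (hgf : g =ᶠ[𝓝[≤] a] f) (hhf : h =ᶠ[𝓝[≥] a] f) : HasDerivAt f f' a := by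
  have hle := hg.hasDerivWithinAt.congr_of_eventuallyEq hgf.symm
    (hgf.eq_of_nhdsWithin self_mem_Iic).symm
  have hge := hh.hasDerivWithinAt.congr_of_eventuallyEq hhf.symm
    (hhf.eq_of_nhdsWithin self_mem_Ici).symm
  simpa only [Iic_union_Ici, hasDerivWithinAt_univ] using hle.union hge

theorem apply_lt_of_hasDerivAt_nonneg_of_pos {g g' : ℝ → ℝ} {a b c : ℝ} (hac : a < c)
    (hga : ContinuousWithinAt g (Ici a) a)
    (hg : ∀ x ∈ Ioo a b, HasDerivAt g (g' x) x) (hg'_nonneg : ∀ x ∈ Ioo a b, 0 ≤ g' x)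
    (hg'_pos : ∀ x ∈ Ioo a c, 0 < g' x) {x : ℝ} (hx : x ∈ Ioo a b) : g a < g x := by
  have hcont : ContinuousOn g (Ico a b) := by
    intro y hy
    rcases hy.1.eq_or_lt with rfl | hay
    · exact hga.mono Ico_subset_Ici_self
    · exact (hg y ⟨hay, hy.2⟩).continuousAt.continuousWithinAt
  have hmono : MonotoneOn g (Ico a b) := by
    refine monotoneOn_of_hasDerivWithinAt_nonneg (f' := g') (convex_Ico a b) hcont (fun y hy => ?_)
      (fun y hy => ?_) <;> rw [interior_Ico] at hy
    exacts [(hg y hy).hasDerivWithinAt, hg'_nonneg y hy]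
  set y := min x c
  have hy : y ∈ Ioo a b := ⟨lt_min hx.1 hac, (min_le_left x c).trans_lt hx.2⟩
  have hstrict : StrictMonoOn g (Icc a y) := by
    refine strictMonoOn_of_hasDerivWithinAt_pos (f' := g') (convex_Icc a y)
      (hcont.mono (Icc_subset_Ico_right hy.2)) (fun z hz => ?_) (fun z hz => ?_) <;>
      rw [interior_Icc] at hz
    · exact (hg z ⟨hz.1, hz.2.trans hy.2⟩).hasDerivWithinAt
    · exact hg'_pos z ⟨hz.1, hz.2.trans_le (min_le_right x c)⟩
  calc g a < g y := hstrict (left_mem_Icc.2 hy.1.le) (right_mem_Icc.2 hy.1.le) hy.1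
    _ ≤ g x := hmono ⟨hy.1.le, hy.2⟩ ⟨hx.1.le, hx.2⟩ (min_le_left x c)

theorem one_sub_two_mul_le_sqrt {a t : ℝ} (ht₀ : 0 ≤ t) (ht : t ≤ 4 / (a ^ 2 + 4)) :
    1 - 2 * t ≤ √(1 - (a * t) ^ 2) := by
  have h : (a ^ 2 + 4) * t ≤ 4 := (le_div_iff₀' (by positivity)).1 ht
  exact (le_abs_self _).trans (abs_le_sqrt (by nlinarith [mul_le_mul_of_nonneg_left h ht₀]))

theorem one_sub_two_mul_lt_sqrt {a t : ℝ} (ht₀ : 0 < t) (ht : t < 4 / (a ^ 2 + 4)) :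
    1 - 2 * t < √(1 - (a * t) ^ 2) := by
  have h : (a ^ 2 + 4) * t < 4 := (lt_div_iff₀' (by positivity)).1 ht
  have hsq : (1 - 2 * t) ^ 2 < 1 - (a * t) ^ 2 := by nlinarith [mul_lt_mul_of_pos_left h ht₀]
  rcases lt_or_ge (1 - 2 * t) 0 with hneg | hnonneg
  · exact hneg.trans_le (sqrt_nonneg _)
  · exact (lt_sqrt hnonneg).2 hsq

theorem div_sqrt_le_div_one_sub_two_mul {c t : ℝ} (hc : 0 < c)
    (ht : t ∈ Ico 0 (4 / (π ^ 2 + 4))) :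
    c / √(1 - (π * t) ^ 2) ≤ c / (1 - 2 * t) ∧
      (c / √(1 - (π * t) ^ 2) = c / (1 - 2 * t) ↔ t = 0) := by
  have hπ : 4 / (π ^ 2 + 4) < 1 / 2 := by
    rw [div_lt_div_iff₀ (by positivity) two_pos]; nlinarith [pi_gt_three]
  have hpos : 0 < 1 - 2 * t := by linarith [ht.2]
  refine ⟨div_le_div_of_nonneg_left hc.le hpos (one_sub_two_mul_le_sqrt ht.1 ht.2.le),
    fun heq => ?_, fun h0 => by simp [h0]⟩
  by_contra h0
  exact heq.not_lt (div_lt_div_of_pos_left hc hpos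
    (one_sub_two_mul_lt_sqrt (lt_of_le_of_ne ht.1 (Ne.symm h0)) ht.2))

theorem hasDerivAt_const_mul_log_one_div_one_sub_two_mul (c : ℝ) {x : ℝ}
    (hx : 1 - 2 * x ≠ 0) :
    HasDerivAt (fun y => c * log (1 / (1 - 2 * y))) (2 * c / (1 - 2 * x)) x := by
  simp only [one_div, log_inv]
  exact ((((hasDerivAt_id x).const_mul 2).const_sub 1).log hx).neg.const_mul c
    |>.congr_deriv (by simp only [id]; field_simp)

namespace Mstar

noncomputable def q : ℝ := (π ^ 2 - 4) / (π ^ 2 + 4)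

noncomputable def κ (n : ℕ) : ℝ := (1 - q ^ n) / 2

noncomputable def coord (n : ℕ) (x : ℝ) : ℝ := (x - κ n) / q ^ n

noncomputable def piece (n : ℕ) (x : ℝ) : ℝ :=
  n / 2 * arcsin (4 * π / (π ^ 2 + 4)) + 1 / 2 * arcsin (π * coord n x)

noncomputable def MMS (x : ℝ) : ℝ := π / 4 * log (1 / (1 - 2 * x))

def IsMstar (M : ℝ → ℝ) : Prop := ∀ n, EqOn M (piece n) (Ico (κ n) (κ (n + 1)))

theorem q_pos : 0 < q := div_pos (by nlinarith [pi_gt_three]) (by positivity)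

theorem q_lt_one : q < 1 := (div_lt_one (by positivity)).2 (by linarith)

theorem one_sub_q_div_two : (1 - q) / 2 = 4 / (π ^ 2 + 4) := by
  unfold q; field_simp; ring

theorem sqrt_one_sub_sq_eq_q : √(1 - (4 * π / (π ^ 2 + 4)) ^ 2) = q := by
  rw [← sqrt_sq q_pos.le]; congr 1; unfold q; field_simp; ring

theorem one_sub_two_mul_κ (n : ℕ) : 1 - 2 * κ n = q ^ n := by unfold κ; ring

theorem κ_zero : κ 0 = 0 := by simp [κ]

theorem κ_succ_sub (n : ℕ) : κ (n + 1) - κ n = q ^ n * (4 / (π ^ 2 + 4)) := by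
  rw [← one_sub_q_div_two]; unfold κ; ring

theorem κ_strictMono : StrictMono κ := fun m n h => by
  have := pow_lt_pow_right_of_lt_one₀ q_pos q_lt_one h
  unfold κ; linarith

theorem κ_one_pos : 0 < κ 1 := κ_zero ▸ κ_strictMono zero_lt_one

theorem exists_mem_Ico_κ {x : ℝ} (hx₀ : 0 ≤ x) (hx : x < 1 / 2) :
    ∃ n, x ∈ Ico (κ n) (κ (n + 1)) := by
  obtain ⟨n, h₁, h₂⟩ := exists_nat_pow_near_of_lt_one (x := 1 - 2 * x) (by linarith)
    (by linarith) q_pos q_lt_one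
  exact ⟨n, by unfold κ; constructor <;> linarith⟩

theorem exists_eq_κ_iff {n : ℕ} {x : ℝ} (hx : x ∈ Ico (κ n) (κ (n + 1))) :
    (∃ m, x = κ m) ↔ x = κ n := by
  refine ⟨?_, fun h => ⟨n, h⟩⟩
  rintro ⟨m, rfl⟩
  have h₁ : n ≤ m := κ_strictMono.le_iff_le.1 hx.1
  have h₂ : m < n + 1 := κ_strictMono.lt_iff_lt.1 hx.2
  rw [show m = n by omega]

theorem κ_lt_one_half (n : ℕ) : κ n < 1 / 2 := by
  have := pow_pos q_pos n
  unfold κ; linarith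

theorem coord_mem_Ico {n : ℕ} {x : ℝ} (hx : x ∈ Ico (κ n) (κ (n + 1))) :
    coord n x ∈ Ico 0 (4 / (π ^ 2 + 4)) := by
  have hq := pow_pos q_pos n
  have := κ_succ_sub n
  exact ⟨div_nonneg (by linarith [hx.1]) hq.le, (div_lt_iff₀' hq).2 (by linarith [hx.2])⟩

theorem coord_κ (n : ℕ) : coord n (κ n) = 0 := by simp [coord]

theorem coord_κ_succ (n : ℕ) : coord n (κ (n + 1)) = 4 / (π ^ 2 + 4) := by
  rw [coord, κ_succ_sub, mul_div_cancel_left₀ _ (pow_pos q_pos n).ne']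

theorem coord_eq_zero_iff {n : ℕ} {x : ℝ} : coord n x = 0 ↔ x = κ n := by
  simp [coord, sub_eq_zero, q_pos.ne']

theorem one_sub_two_mul_eq (n : ℕ) (x : ℝ) : 1 - 2 * x = q ^ n * (1 - 2 * coord n x) := by
  have hq := (pow_pos q_pos n).ne'
  rw [coord]
  field_simp
  linear_combination one_sub_two_mul_κ n

theorem hasDerivAt_MMS {x : ℝ} (hx : 1 - 2 * x ≠ 0) : HasDerivAt MMS (π / 2 / (1 - 2 * x)) x :=
  hasDerivAt_const_mul_log_one_div_one_sub_two_mul (π / 4) hx |>.congr_deriv (by ring)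

theorem hasDerivAt_piece (n : ℕ) {x : ℝ} (hx : coord n x ∈ Icc 0 (4 / (π ^ 2 + 4))) :
    HasDerivAt (piece n) (π / (2 * q ^ n) / √(1 - (π * coord n x) ^ 2)) x := by
  have hlt : π * coord n x < 1 := by
    calc π * coord n x ≤ π * (4 / (π ^ 2 + 4)) := mul_le_mul_of_nonneg_left hx.2 pi_pos.le
      _ < 1 := by rw [mul_div_assoc', div_lt_one (by positivity)]; nlinarith [pi_gt_three]
  have hgt : -1 < π * coord n x := by nlinarith [hx.1, pi_pos]
  have hcoord : HasDerivAt (fun y => π * coord n y) (π / q ^ n) x :=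
    (((hasDerivAt_id x).sub_const (κ n)).div_const (q ^ n)).const_mul π |>.congr_deriv (by ring)
  have hq := (pow_pos q_pos n).ne'
  exact ((hasDerivAt_arcsin hgt.ne' hlt.ne).comp x hcoord).const_mul (1 / 2 : ℝ)
    |>.const_add (n / 2 * arcsin (4 * π / (π ^ 2 + 4))) |>.congr_deriv (by field_simp)

theorem hasDerivAt_piece_κ (n : ℕ) : HasDerivAt (piece n) (π / (2 * q ^ n)) (κ n) := by
  have hmem : coord n (κ n) ∈ Icc 0 (4 / (π ^ 2 + 4)) := by
    rw [coord_κ]; exact ⟨le_rfl, by positivity⟩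
  simpa [coord_κ] using hasDerivAt_piece n hmem

theorem hasDerivAt_piece_κ_succ (n : ℕ) :
    HasDerivAt (piece n) (π / (2 * q ^ (n + 1))) (κ (n + 1)) := by
  have hmem : coord n (κ (n + 1)) ∈ Icc 0 (4 / (π ^ 2 + 4)) := by
    rw [coord_κ_succ]; exact ⟨by positivity, le_rfl⟩
  refine (hasDerivAt_piece n hmem).congr_deriv ?_
  rw [coord_κ_succ, mul_div_assoc', mul_comm π 4, sqrt_one_sub_sq_eq_q, pow_succ]
  ring

theorem piece_κ_succ (n : ℕ) : piece n (κ (n + 1)) = piece (n + 1) (κ (n + 1)) := by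
  simp only [piece, coord_κ_succ, coord_κ, mul_div_assoc', mul_comm π 4, mul_zero, arcsin_zero]
  push_cast
  ring

namespace IsMstar

variable {M : ℝ → ℝ}

theorem hasDerivAt (hM : IsMstar M) {n : ℕ} {x : ℝ} (hx : x ∈ Ico (κ n) (κ (n + 1)))
    (hx₀ : 0 < x) : HasDerivAt M (π / (2 * q ^ n) / √(1 - (π * coord n x) ^ 2)) x := by
  rcases hx.1.eq_or_lt with rfl | hlt
  · obtain ⟨m, rfl⟩ : ∃ m, n = m + 1 :=
      Nat.exists_eq_succ_of_ne_zero (by rintro rfl; exact hx₀.ne' κ_zero)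
    have hκ := κ_strictMono (Nat.lt_succ_self (m + 1))
    rw [coord_κ, mul_zero, zero_pow two_ne_zero, sub_zero, sqrt_one, div_one]
    refine hasDerivAt_of_eventuallyEq_nhdsLE_nhdsGE (hasDerivAt_piece_κ_succ m)
      (hasDerivAt_piece_κ (m + 1)) ?_ ?_
    · filter_upwards [Ioc_mem_nhdsLE (κ_strictMono (Nat.lt_succ_self m))] with y hy
      rcases hy.2.lt_or_eq with hy' | rfl
      · exact (hM m ⟨hy.1.le, hy'⟩).symm
      · rw [piece_κ_succ]; exact (hM (m + 1) ⟨le_rfl, hκ⟩).symm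
    · filter_upwards [Ico_mem_nhdsGE hκ] with y hy
      exact (hM (m + 1) hy).symm
  · refine (hasDerivAt_piece n (Ico_subset_Icc_self (coord_mem_Ico hx))).congr_of_eventuallyEq ?_
    filter_upwards [Ioo_mem_nhds hlt hx.2] with y hy
    exact hM n (Ioo_subset_Ico_self hy)

theorem differentiableAt (hM : IsMstar M) {x : ℝ} (hx : x ∈ Ioo 0 (1 / 2)) :
    DifferentiableAt ℝ M x := by
  obtain ⟨n, hn⟩ := exists_mem_Ico_κ hx.1.le hx.2
  exact (hM.hasDerivAt hn hx.1).differentiableAt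

theorem deriv_le_deriv_MMS (hM : IsMstar M) {x : ℝ} (hx : x ∈ Ioo 0 (1 / 2)) :
    deriv M x ≤ deriv MMS x ∧ (deriv M x = deriv MMS x ↔ ∃ n, x = κ n) := by
  obtain ⟨n, hn⟩ := exists_mem_Ico_κ hx.1.le hx.2
  have hMMS : π / 2 / (1 - 2 * x) = π / (2 * q ^ n) / (1 - 2 * coord n x) := by
    rw [one_sub_two_mul_eq n x, div_div, div_div, mul_assoc]
  rw [(hM.hasDerivAt hn hx.1).deriv, (hasDerivAt_MMS (by linarith [hx.2])).deriv, hMMS,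
    exists_eq_κ_iff hn, ← coord_eq_zero_iff]
  exact div_sqrt_le_div_one_sub_two_mul (by have := q_pos; positivity) (coord_mem_Ico hn)

theorem deriv_lt_deriv_MMS (hM : IsMstar M) {x : ℝ} (hx : x ∈ Ioo 0 (κ 1)) :
    deriv M x < deriv MMS x := by
  obtain ⟨hle, heq⟩ := hM.deriv_le_deriv_MMS ⟨hx.1, hx.2.trans (κ_lt_one_half 1)⟩
  refine hle.lt_of_ne fun h => hx.1.ne' ?_
  have hx₀ : x ∈ Ico (κ 0) (κ 1) := ⟨κ_zero ▸ hx.1.le, hx.2⟩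
  simpa [κ_zero] using (exists_eq_κ_iff hx₀).1 (heq.1 h)

theorem eqOn_Ico_zero (hM : IsMstar M) : EqOn M (piece 0) (Ico 0 (κ 1)) := κ_zero ▸ hM 0

theorem apply_zero (hM : IsMstar M) : M 0 = 0 := by
  simpa [piece, coord, κ_zero] using hM.eqOn_Ico_zero ⟨le_rfl, κ_one_pos⟩

theorem continuousWithinAt_Ici_zero (hM : IsMstar M) : ContinuousWithinAt M (Ici 0) 0 := by
  have hpiece := (hasDerivAt_piece_κ 0).continuousAt
  rw [κ_zero] at hpiece
  refine hpiece.continuousWithinAt.congr_of_eventuallyEq ?_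
    (hM.eqOn_Ico_zero ⟨le_rfl, κ_one_pos⟩)
  filter_upwards [Ico_mem_nhdsGE κ_one_pos] with y hy using hM.eqOn_Ico_zero hy

theorem lt_MMS (hM : IsMstar M) {x : ℝ} (hx : x ∈ Ioo 0 (1 / 2)) : M x < MMS x := by
  have hMMS {y : ℝ} (hy : y < 1 / 2) : DifferentiableAt ℝ MMS y :=
    (hasDerivAt_MMS (by linarith)).differentiableAt
  have key := apply_lt_of_hasDerivAt_nonneg_of_pos (g := MMS - M)
    (g' := fun y => deriv MMS y - deriv M y) κ_one_pos
    ((hMMS (by norm_num)).continuousAt.continuousWithinAt.sub hM.continuousWithinAt_Ici_zero)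
    (fun y hy => (hMMS hy.2).hasDerivAt.sub (hM.differentiableAt hy).hasDerivAt)
    (fun y hy => sub_nonneg.2 (hM.deriv_le_deriv_MMS hy).1)
    (fun y hy => sub_pos.2 (hM.deriv_lt_deriv_MMS hy)) hx
  simpa [MMS, hM.apply_zero] using key

end IsMstar

end Mstar

open Mstar in
/-- For any function `M` satisfying the piecewise definition of `M_⋆`, one has
`M'(x) ≤ M_MS'(x)` on `(0,1/2)` with equality exactly at the points `κ n`, where
`M_MS(x) = (π/4) log(1/(1−2x))`; consequently `M x < M_MS x` on `(0,1/2)`. -/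
theorem Mstar_deriv_le_MMS_deriv (M : ℝ → ℝ)
    (hM : ∀ n : ℕ, ∀ x ∈ Set.Ico ((1 - ((π ^ 2 - 4) / (π ^ 2 + 4)) ^ n) / 2)
        ((1 - ((π ^ 2 - 4) / (π ^ 2 + 4)) ^ (n + 1)) / 2),
      M x = (n : ℝ) / 2 * Real.arcsin (4 * π / (π ^ 2 + 4))
          + 1 / 2 * Real.arcsin (π * (x - (1 - ((π ^ 2 - 4) / (π ^ 2 + 4)) ^ n) / 2)
              / (1 - 2 * ((1 - ((π ^ 2 - 4) / (π ^ 2 + 4)) ^ n) / 2)))) :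
    (∀ x ∈ Set.Ioo (0 : ℝ) (1 / 2),
        deriv M x ≤ deriv (fun y => π / 4 * Real.log (1 / (1 - 2 * y))) x ∧
          (deriv M x = deriv (fun y => π / 4 * Real.log (1 / (1 - 2 * y))) x ↔
            ∃ n : ℕ, x = (1 - ((π ^ 2 - 4) / (π ^ 2 + 4)) ^ n) / 2)) ∧
      ∀ x ∈ Set.Ioo (0 : ℝ) (1 / 2), M x < π / 4 * Real.log (1 / (1 - 2 * x)) := by
  have hMstar : IsMstar M := fun n x hx => by
    rw [hM n x hx, piece, coord, ← one_sub_two_mul_κ, mul_div_assoc π]; rfl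
  exact ⟨fun x hx => hMstar.deriv_le_deriv_MMS hx, fun x hx => hMstar.lt_MMS hx⟩
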